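/- arXiv:1307.0661 — 8 statements merged into one kernel-verified Lean document; each statement's English description precedes it below -/
import Mathlib

section
/- Let c₁, c₂, c₃ ∈ ℂ and let b₁, b₂, b₃ : ℂ → ℂ be functions satisfying, for all z ∈ ℂ: b₁(z)c₁ + b₂(z)c₂ + b₃(z)c₃ = φ₂(z), b₁(z)c₁² + b₂(z)c₂² + b₃(z)c₃² = 2φ₃(z), and b₁(z)c₁³ + b₂(z)c₂³ + b₃(z)c₃³ = 6φ₄(z). Then c₁, c₂, c₃ are all nonzero and pairwise distinct, the functions b₁, b₂, b₃ are uniquely determined, and b₁, b₂, b₃ are linearly independent over ℂ. -/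
/-- For `k ≥ 1`, `φ_k(z) = ∫_0^1 exp((1-θ)z) θ^(k-1)/(k-1)! dθ`; `φ_0(z) = exp z`. -/
noncomputable def phi : ℕ → ℂ → ℂ
  | 0 => fun z => Complex.exp z
  | (k + 1) => fun z =>
      ∫ θ in (0:ℝ)..1, Complex.exp ((1 - (θ : ℂ)) * z) * (θ : ℂ) ^ k / (Nat.factorial k : ℂ)

/-! Put `c = ![c₁, c₂, c₃]` and `M = (diagonal c * vandermonde c)ᵀ`, so `M j i = c i ^ (j + 1)`;
the hypotheses say `∑ i, M j i • b i = ψ j` with `ψ = ![φ₂, 2 φ₃, 6 φ₄]`.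

Integrating by parts, `z φ_{k+1}(z) = φ_k(z) - 1/k!`, hence `z^k φ_k(z) = e^z - ∑_{j<k} z^j/j!`.
A linear relation among `φ₂, φ₃, φ₄` therefore becomes `p(z) e^z = q(z)` for polynomials `p, q`,
the coefficients of the relation being those of `p`; differentiating gives `(p + p') e^z = q'`,
and induction on `deg q` yields `p = 0`. So `ψ` is linearly independent. Then `M` is invertible,
and `det M = c₁ c₂ c₃ · Vandermonde(c)` gives the conditions on the `cᵢ`; `b` is determined by `ψ`,
and it is linearly independent because its span contains the three-dimensional span of `ψ`. -/

open Matrix Polynomial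

section MatrixCombination

open Submodule

variable {K V ι : Type*} [Field K] [AddCommGroup V] [Module K V] [Fintype ι]
  {M : Matrix ι ι K} {b ψ : ι → V}

theorem det_ne_zero_of_sum_smul_eq_of_linearIndependent [DecidableEq ι]
    (hb : ∀ j, ∑ i, M j i • b i = ψ j) (hψ : LinearIndependent K ψ) : M.det ≠ 0 := by
  intro hdet
  obtain ⟨w, hw0, hw⟩ := exists_vecMul_eq_zero_iff.mpr hdet
  refine hw0 (funext <| Fintype.linearIndependent_iff.mp hψ w ?_)
  calc ∑ j, w j • ψ j = ∑ i, (w ᵥ* M) i • b i := by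
        simp only [← hb, Finset.smul_sum, smul_smul, vecMul, dotProduct, Finset.sum_smul]
        exact Finset.sum_comm
    _ = 0 := by simp [hw]

theorem linearIndependent_of_sum_smul_eq (hb : ∀ j, ∑ i, M j i • b i = ψ j)
    (hψ : LinearIndependent K ψ) : LinearIndependent K b := by
  have hspan : span K (Set.range ψ) ≤ span K (Set.range b) := by
    rw [span_le]
    rintro _ ⟨j, rfl⟩
    rw [← hb j]
    exact sum_mem fun i _ => smul_mem _ _ (subset_span ⟨i, rfl⟩)
  have := FiniteDimensional.span_of_finite K (Set.finite_range b)
  rw [linearIndependent_iff_card_eq_finrank_span] at hψ ⊢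
  exact le_antisymm (hψ ▸ Submodule.finrank_mono hspan) (finrank_range_le_card b)

theorem eq_of_sum_smul_eq_sum_smul [DecidableEq ι] (hM : M.det ≠ 0) {b' : ι → V}
    (h : ∀ j, ∑ i, M j i • b i = ∑ i, M j i • b' i) : b = b' := by
  have hinv : M⁻¹ * M = 1 := nonsing_inv_mul M (isUnit_iff_ne_zero.mpr hM)
  have hrecover (c : ι → V) (k : ι) : c k = ∑ j, M⁻¹ k j • ∑ i, M j i • c i := by
    simp only [Finset.smul_sum, smul_smul]
    rw [Finset.sum_comm]
    simp [← Finset.sum_smul, ← mul_apply, hinv, one_apply]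
  funext k
  rw [hrecover b, hrecover b']
  simp only [h]

end MatrixCombination

theorem diagonal_mul_vandermonde_apply {R : Type*} [CommRing R] {n : ℕ} (c : Fin n → R)
    (i j : Fin n) : (diagonal c * vandermonde c) i j = c i ^ (j + 1 : ℕ) := by
  simp [vandermonde, pow_succ']

theorem det_diagonal_mul_vandermonde_ne_zero_iff {K : Type*} [Field K] {n : ℕ} {c : Fin n → K} :
    (diagonal c * vandermonde c).det ≠ 0 ↔ (∀ i, c i ≠ 0) ∧ Function.Injective c := by
  rw [det_mul, det_diagonal, mul_ne_zero_iff, Finset.prod_ne_zero_iff, det_vandermonde_ne_zero_iff]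
  simp

theorem Polynomial.eq_zero_of_add_derivative_eq_zero {K : Type*} [Field K] [CharZero K] {p : K[X]}
    (h : p + derivative p = 0) : p = 0 := by
  have hp : p = -derivative p := eq_neg_of_add_eq_zero_left h
  by_cases hdeg : p.natDegree = 0
  · rwa [derivative_of_natDegree_zero hdeg, neg_zero] at hp
  · exact absurd ((congrArg natDegree hp).trans (natDegree_neg _))
      (natDegree_derivative_lt hdeg).ne'

theorem Polynomial.eq_zero_of_eval_mul_exp_eq_zero {p : ℂ[X]}
    (h : ∀ z, p.eval z * Complex.exp z = 0) : p = 0 :=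
  Polynomial.funext fun z => by simpa [Complex.exp_ne_zero] using h z

theorem Polynomial.eval_add_derivative_mul_exp {p q : ℂ[X]}
    (h : ∀ z, p.eval z * Complex.exp z = q.eval z) (z : ℂ) :
    (p + derivative p).eval z * Complex.exp z = (derivative q).eval z := by
  have hL : HasDerivAt (fun z => p.eval z * Complex.exp z) _ z :=
    (p.hasDerivAt z).mul (Complex.hasDerivAt_exp z)
  simp only [h] at hL
  rw [← hL.unique (q.hasDerivAt z), ← h z, eval_add]
  ring

theorem Polynomial.eq_zero_of_eval_mul_exp_eq_eval (q : ℂ[X]) {p : ℂ[X]}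
    (h : ∀ z, p.eval z * Complex.exp z = q.eval z) : p = 0 := by
  induction hn : q.natDegree using Nat.strong_induction_on generalizing p q with
  | _ n ih =>
    refine eq_zero_of_add_derivative_eq_zero ?_
    have hd := eval_add_derivative_mul_exp h
    by_cases hq : q.natDegree = 0
    · rw [derivative_of_natDegree_zero hq] at hd
      exact eq_zero_of_eval_mul_exp_eq_zero (by simpa using hd)
    · exact ih _ (hn ▸ natDegree_derivative_lt hq) (derivative q) hd rfl

open Nat Finset

noncomputable def phiIntegrand (k : ℕ) (z : ℂ) (θ : ℝ) : ℂ :=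
  Complex.exp ((1 - (θ : ℂ)) * z) * (θ : ℂ) ^ k / (k ! : ℂ)

theorem phi_zero (z : ℂ) : phi 0 z = Complex.exp z := rfl

theorem phi_succ (k : ℕ) (z : ℂ) : phi (k + 1) z = ∫ θ in (0:ℝ)..1, phiIntegrand k z θ := rfl

@[fun_prop]
theorem continuous_phiIntegrand (k : ℕ) (z : ℂ) : Continuous (phiIntegrand k z) := by
  unfold phiIntegrand
  fun_prop

theorem phiIntegrand_one (k : ℕ) (z : ℂ) : phiIntegrand k z 1 = 1 / (k ! : ℂ) := by
  simp [phiIntegrand]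

theorem phiIntegrand_zero (k : ℕ) (z : ℂ) : phiIntegrand k z 0 = Complex.exp z * 0 ^ k := by
  cases k <;> simp [phiIntegrand]

theorem hasDerivAt_cexp_one_sub_mul (z : ℂ) (θ : ℝ) :
    HasDerivAt (fun t : ℝ => Complex.exp ((1 - (t : ℂ)) * z))
      (-z * Complex.exp ((1 - (θ : ℂ)) * z)) θ := by
  have h : HasDerivAt (fun t : ℝ => (1 - (t : ℂ)) * z) (-z) θ := by
    simpa using ((Complex.ofRealCLM.hasDerivAt (x := θ)).const_sub 1).mul_const z
  simpa [mul_comm] using h.cexp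

theorem hasDerivAt_phiIntegrand_zero (z : ℂ) (θ : ℝ) :
    HasDerivAt (phiIntegrand 0 z) (-z * phiIntegrand 0 z θ) θ := by
  convert hasDerivAt_cexp_one_sub_mul z θ using 1
  · funext t
    simp [phiIntegrand]
  · simp [phiIntegrand]

theorem hasDerivAt_phiIntegrand_succ (k : ℕ) (z : ℂ) (θ : ℝ) :
    HasDerivAt (phiIntegrand (k + 1) z)
      (phiIntegrand k z θ - z * phiIntegrand (k + 1) z θ) θ := by
  have hpow : HasDerivAt (fun t : ℝ => (t : ℂ) ^ (k + 1)) ((k + 1 : ℂ) * (θ : ℂ) ^ k) θ := by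
    simpa using (hasDerivAt_pow (k + 1) (θ : ℂ)).comp_ofReal
  refine (((hasDerivAt_cexp_one_sub_mul z θ).mul hpow).div_const _).congr_deriv ?_
  simp only [phiIntegrand, factorial_succ, cast_mul, cast_succ]
  field_simp
  ring

theorem mul_phi_succ (k : ℕ) (z : ℂ) : z * phi (k + 1) z = phi k z - 1 / (k ! : ℂ) := by
  cases k with
  | zero =>
    have hftc := intervalIntegral.integral_eq_sub_of_hasDerivAt
      (fun θ _ => hasDerivAt_phiIntegrand_zero z θ)
      (Continuous.intervalIntegrable (by fun_prop) 0 1)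
    rw [intervalIntegral.integral_const_mul, ← phi_succ, phiIntegrand_one, phiIntegrand_zero,
      pow_zero, mul_one] at hftc
    rw [phi_zero]
    linear_combination -hftc
  | succ k =>
    have hftc := intervalIntegral.integral_eq_sub_of_hasDerivAt
      (fun θ _ => hasDerivAt_phiIntegrand_succ k z θ)
      (Continuous.intervalIntegrable (by fun_prop) 0 1)
    rw [intervalIntegral.integral_sub (Continuous.intervalIntegrable (by fun_prop) 0 1)
      (Continuous.intervalIntegrable (by fun_prop) 0 1), intervalIntegral.integral_const_mul,
      ← phi_succ, ← phi_succ, phiIntegrand_one, phiIntegrand_zero, zero_pow (succ_ne_zero k),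
      mul_zero, sub_zero] at hftc
    linear_combination -hftc

theorem pow_mul_phi (k : ℕ) (z : ℂ) :
    z ^ k * phi k z = Complex.exp z - ∑ j ∈ range k, z ^ j / (j ! : ℂ) := by
  induction k with
  | zero => simp [phi_zero]
  | succ k ih =>
    rw [sum_range_succ, pow_succ, mul_assoc, mul_phi_succ]
    linear_combination ih

theorem linearIndependent_phi : LinearIndependent ℂ ![phi 2, phi 3, phi 4] := by
  rw [Fintype.linearIndependent_iff]
  intro g hg
  have hrel (z : ℂ) : g 0 * phi 2 z + g 1 * phi 3 z + g 2 * phi 4 z = 0 := by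
    simpa [Fin.sum_univ_three] using congrFun hg z
  let expTrunc (k : ℕ) : ℂ[X] := ∑ j ∈ range k, C (1 / (j ! : ℂ)) * X ^ j
  have hphi (k : ℕ) (z : ℂ) : z ^ k * phi k z = Complex.exp z - (expTrunc k).eval z := by
    simp [expTrunc, eval_finsetSum, pow_mul_phi, div_eq_inv_mul]
  set p : ℂ[X] := C (g 0) * X ^ 2 + C (g 1) * X + C (g 2)
  have hp : p = 0 := by
    refine eq_zero_of_eval_mul_exp_eq_eval
      (C (g 0) * X ^ 2 * expTrunc 2 + C (g 1) * X * expTrunc 3 + C (g 2) * expTrunc 4) fun z => ?_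
    simp only [p, eval_add, eval_mul, eval_C, eval_pow, eval_X]
    linear_combination z ^ 4 * hrel z - g 0 * z ^ 2 * hphi 2 z - g 1 * z * hphi 3 z - g 2 * hphi 4 z
  intro i
  fin_cases i
  · simpa [p] using congrArg (coeff · 2) hp
  · simpa [p] using congrArg (coeff · 1) hp
  · simpa [p] using congrArg (coeff · 0) hp

theorem sum_diagonal_mul_vandermonde_smul_eq_phi {c₁ c₂ c₃ : ℂ} {b₁ b₂ b₃ : ℂ → ℂ}
    (h1 : ∀ z, b₁ z * c₁ + b₂ z * c₂ + b₃ z * c₃ = phi 2 z)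
    (h2 : ∀ z, b₁ z * c₁ ^ 2 + b₂ z * c₂ ^ 2 + b₃ z * c₃ ^ 2 = 2 * phi 3 z)
    (h3 : ∀ z, b₁ z * c₁ ^ 3 + b₂ z * c₂ ^ 3 + b₃ z * c₃ ^ 3 = 6 * phi 4 z) (j : Fin 3) :
    ∑ i, (diagonal ![c₁, c₂, c₃] * vandermonde ![c₁, c₂, c₃])ᵀ j i • ![b₁, b₂, b₃] i =
      ![phi 2, (2 : ℂ) • phi 3, (6 : ℂ) • phi 4] j := by
  funext z
  simp only [Finset.sum_apply, Pi.smul_apply, smul_eq_mul, transpose_apply,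
    diagonal_mul_vandermonde_apply, Fin.sum_univ_three]
  fin_cases j
  · simpa [mul_comm] using h1 z
  · simpa [mul_comm] using h2 z
  · simpa [mul_comm] using h3 z

theorem stmt_4 (c₁ c₂ c₃ : ℂ) (b₁ b₂ b₃ : ℂ → ℂ)
    (h1 : ∀ z : ℂ, b₁ z * c₁ + b₂ z * c₂ + b₃ z * c₃ = phi 2 z)
    (h2 : ∀ z : ℂ, b₁ z * c₁ ^ 2 + b₂ z * c₂ ^ 2 + b₃ z * c₃ ^ 2 = 2 * phi 3 z)
    (h3 : ∀ z : ℂ, b₁ z * c₁ ^ 3 + b₂ z * c₂ ^ 3 + b₃ z * c₃ ^ 3 = 6 * phi 4 z) :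
    (c₁ ≠ 0 ∧ c₂ ≠ 0 ∧ c₃ ≠ 0 ∧ c₁ ≠ c₂ ∧ c₁ ≠ c₃ ∧ c₂ ≠ c₃) ∧
    (∀ b₁' b₂' b₃' : ℂ → ℂ,
      (∀ z : ℂ, b₁' z * c₁ + b₂' z * c₂ + b₃' z * c₃ = phi 2 z) →
      (∀ z : ℂ, b₁' z * c₁ ^ 2 + b₂' z * c₂ ^ 2 + b₃' z * c₃ ^ 2 = 2 * phi 3 z) →
      (∀ z : ℂ, b₁' z * c₁ ^ 3 + b₂' z * c₂ ^ 3 + b₃' z * c₃ ^ 3 = 6 * phi 4 z) →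
      b₁' = b₁ ∧ b₂' = b₂ ∧ b₃' = b₃) ∧
    LinearIndependent ℂ ![b₁, b₂, b₃] := by
  have hψ : LinearIndependent ℂ ![phi 2, (2 : ℂ) • phi 3, (6 : ℂ) • phi 4] := by
    convert linearIndependent_phi.units_smul
      ![1, Units.mk0 2 two_ne_zero, Units.mk0 6 (by norm_num)]
    funext i
    fin_cases i <;> simp
  have hb := sum_diagonal_mul_vandermonde_smul_eq_phi h1 h2 h3
  have hdet := det_ne_zero_of_sum_smul_eq_of_linearIndependent hb hψ
  obtain ⟨hc, hinj⟩ := det_diagonal_mul_vandermonde_ne_zero_iff.mp <| by rwa [det_transpose] at hdet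
  refine ⟨⟨hc 0, hc 1, hc 2, hinj.ne (a₁ := 0) (a₂ := 1) (by decide),
    hinj.ne (a₁ := 0) (a₂ := 2) (by decide), hinj.ne (a₁ := 1) (a₂ := 2) (by decide)⟩,
    fun b₁' b₂' b₃' h1' h2' h3' => ?_, linearIndependent_of_sum_smul_eq hb hψ⟩
  have hb' := sum_diagonal_mul_vandermonde_smul_eq_phi h1' h2' h3'
  have := eq_of_sum_smul_eq_sum_smul hdet fun j => (hb' j).trans (hb j).symm
  exact ⟨congrFun this 0, congrFun this 1, congrFun this 2⟩
end

section
/- Let c₆, c₇ ∈ ℂ \ {1} be nonzero and distinct, set c₈ = 1, and let b₆, b₇, b₈ be the functions b₆ = (6φ₄ − 2(c₇+c₈)φ₃ + c₇c₈φ₂)/(c₆(c₆−c₇)(c₆−c₈)), b₇ = (−6φ₄ + 2(c₆+c₈)φ₃ − c₆c₈φ₂)/(c₇(c₆−c₇)(c₇−c₈)), b₈ = (6φ₄ − 2(c₆+c₇)φ₃ + c₆c₇φ₂)/(c₈(c₆−c₈)(c₇−c₈)). Then the weakened fifth-order condition b₆(0)c₆⁴/4! + b₇(0)c₇⁴/4!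 + b₈(0)c₈⁴/4! = φ₅(0) = 1/120 holds if and only if 10 c₆ c₇ = 5(c₆ + c₇) − 3. In particular, it holds for c₆ = 1/5, c₇ = 2/3. -/
lemma phi_zero_s9 (k : ℕ) : phi (k+1) 0 = 1 / ((k+1) * Nat.factorial k : ℂ) := by
  show (∫ θ in (0:ℝ)..1, Complex.exp ((1 - (θ : ℂ)) * 0) * (θ : ℂ) ^ k / (Nat.factorial k : ℂ)) = _
  have : ∀ θ : ℝ, Complex.exp ((1 - (θ : ℂ)) * 0) * (θ : ℂ) ^ k / (Nat.factorial k : ℂ)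
      = ((θ ^ k / (Nat.factorial k) : ℝ) : ℂ) := by
    intro θ; push_cast; simp [Complex.exp_zero]
  simp_rw [this, intervalIntegral.integral_ofReal, intervalIntegral.integral_div,
    integral_pow]
  push_cast
  simp
  ring

theorem stmt_9 (c₆ c₇ c₈ : ℂ) (h₆ : c₆ ≠ 0) (h₇ : c₇ ≠ 0)
    (h₆1 : c₆ ≠ 1) (h₇1 : c₇ ≠ 1) (h₆₇ : c₆ ≠ c₇) (h₈ : c₈ = 1)
    (b₆ b₇ b₈ : ℂ → ℂ)
    (hb₆ : ∀ z : ℂ, b₆ z =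
      (6 * phi 4 z - 2 * (c₇ + c₈) * phi 3 z + c₇ * c₈ * phi 2 z) / (c₆ * (c₆ - c₇) * (c₆ - c₈)))
    (hb₇ : ∀ z : ℂ, b₇ z =
      (-6 * phi 4 z + 2 * (c₆ + c₈) * phi 3 z - c₆ * c₈ * phi 2 z) / (c₇ * (c₆ - c₇) * (c₇ - c₈)))
    (hb₈ : ∀ z : ℂ, b₈ z =
      (6 * phi 4 z - 2 * (c₆ + c₇) * phi 3 z + c₆ * c₇ * phi 2 z) / (c₈ * (c₆ - c₈) * (c₇ - c₈))) :
    phi 5 0 = 1 / 120 ∧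
    ((b₆ 0 * c₆ ^ 4 / 24 + b₇ 0 * c₇ ^ 4 / 24 + b₈ 0 * c₈ ^ 4 / 24 = phi 5 0) ↔
      10 * c₆ * c₇ = 5 * (c₆ + c₇) - 3) ∧
    (c₆ = 1 / 5 → c₇ = 2 / 3 →
      b₆ 0 * c₆ ^ 4 / 24 + b₇ 0 * c₇ ^ 4 / 24 + b₈ 0 * c₈ ^ 4 / 24 = phi 5 0) := by
  have p2 : phi 2 0 = 1/2 := by rw [show (2:ℕ) = 1+1 from rfl, phi_zero_s9]; norm_num
  have p3 : phi 3 0 = 1/6 := by rw [show (3:ℕ) = 2+1 from rfl, phi_zero_s9]; norm_num [Nat.factorial]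
  have p4 : phi 4 0 = 1/24 := by rw [show (4:ℕ) = 3+1 from rfl, phi_zero_s9]; norm_num [Nat.factorial]
  have p5 : phi 5 0 = 1/120 := by rw [show (5:ℕ) = 4+1 from rfl, phi_zero_s9]; norm_num [Nat.factorial]
  have h67 : c₆ - c₇ ≠ 0 := sub_ne_zero.mpr h₆₇
  have h61 : c₆ - 1 ≠ 0 := sub_ne_zero.mpr h₆1
  have h71 : c₇ - 1 ≠ 0 := sub_ne_zero.mpr h₇1
  subst h₈
  rw [hb₆, hb₇, hb₈, p2, p3, p4, p5]
  have key : (6 * (1/24:ℂ) - 2 * (c₇ + 1) * (1/6) + c₇ * 1 * (1/2)) / (c₆ * (c₆ - c₇) * (c₆ - 1))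
        * c₆ ^ 4 / 24
      + (-6 * (1/24:ℂ) + 2 * (c₆ + 1) * (1/6) - c₆ * 1 * (1/2)) / (c₇ * (c₆ - c₇) * (c₇ - 1))
        * c₇ ^ 4 / 24
      + (6 * (1/24:ℂ) - 2 * (c₆ + c₇) * (1/6) + c₆ * c₇ * (1/2)) / (1 * (c₆ - 1) * (c₇ - 1))
        * 1 ^ 4 / 24
      = 1/120 + (10 * c₆ * c₇ - 5 * (c₆ + c₇) + 3) / 1440 := by
    have hA : c₆ * (c₆ - c₇) * (c₆ - 1) * 24 ≠ 0 := by
      simp [h₆, h67, h61]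
    have hB : c₇ * (c₆ - c₇) * (c₇ - 1) * 24 ≠ 0 := by
      simp [h₇, h67, h71]
    have hC : 1 * (c₆ - 1) * (c₇ - 1) * 24 ≠ 0 := by
      simp [h61, h71]
    rw [div_mul_eq_mul_div, div_mul_eq_mul_div, div_mul_eq_mul_div,
      div_div, div_div, div_div,
      div_add_div _ _ hA hB, div_add_div _ _ (mul_ne_zero hA hB) hC,
      div_add_div _ _ (by norm_num : (120:ℂ) ≠ 0) (by norm_num : (1440:ℂ) ≠ 0),
      div_eq_div_iff (mul_ne_zero (mul_ne_zero hA hB) hC) (by norm_num)]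
    ring
  rw [key]
  refine ⟨rfl, ?_, ?_⟩
  · constructor
    · intro h
      linear_combination 1440 * h
    · intro h
      linear_combination h / 1440
  · rintro rfl rfl
    norm_num
end

section
/- Let c₂ = c₃ = c₅ = 1/2, c₄ = 1/4, and define a₃₂(z) = (1/2)φ₂(z/2), a₄₂ = 0, a₄₃(z) = (1/8)φ₂(z/4), a₅₂ = 0, a₅₃(z) = −(1/2)φ₂(z/2) + 2φ₃(z/2), a₅₄(z) = 2φ₂(z/2) − 4φ₃(z/2). Then for all z ∈ ℂ: a₃₂(z)c₂ = c₃²φ₂(c₃z); a₄₂(z)c₂ + a₄₃(z)c₃ = c₄²φ₂(c₄z); a₅₂(z)c₂ + a₅₃(z)c₃ + a₅₄(z)c₄ = c₅²φ₂(c₅z); and a₅₂(z)c₂²/2 + a₅₃(z)c₃²/2 + a₅₄(z)c₄²/2 = c₅³φ₃(c₅z). Equivalently, ψ_{2,3} = ψ_{2,4} = ψ_{2,5} = ψ_{3,5} = 0. -/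
theorem stmt_10 (c₂ c₃ c₄ c₅ : ℂ)
    (hc₂ : c₂ = 1 / 2) (hc₃ : c₃ = 1 / 2) (hc₄ : c₄ = 1 / 4) (hc₅ : c₅ = 1 / 2)
    (a₃₂ a₄₂ a₄₃ a₅₂ a₅₃ a₅₄ : ℂ → ℂ)
    (ha₃₂ : ∀ z : ℂ, a₃₂ z = (1 / 2) * phi 2 (z / 2))
    (ha₄₂ : ∀ z : ℂ, a₄₂ z = 0)
    (ha₄₃ : ∀ z : ℂ, a₄₃ z = (1 / 8) * phi 2 (z / 4))
    (ha₅₂ : ∀ z : ℂ, a₅₂ z = 0)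
    (ha₅₃ : ∀ z : ℂ, a₅₃ z = -(1 / 2) * phi 2 (z / 2) + 2 * phi 3 (z / 2))
    (ha₅₄ : ∀ z : ℂ, a₅₄ z = 2 * phi 2 (z / 2) - 4 * phi 3 (z / 2)) :
    (∀ z : ℂ, a₃₂ z * c₂ = c₃ ^ 2 * phi 2 (c₃ * z)) ∧
    (∀ z : ℂ, a₄₂ z * c₂ + a₄₃ z * c₃ = c₄ ^ 2 * phi 2 (c₄ * z)) ∧
    (∀ z : ℂ, a₅₂ z * c₂ + a₅₃ z * c₃ + a₅₄ z * c₄ = c₅ ^ 2 * phi 2 (c₅ * z)) ∧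
    (∀ z : ℂ, a₅₂ z * c₂ ^ 2 / 2 + a₅₃ z * c₃ ^ 2 / 2 + a₅₄ z * c₄ ^ 2 / 2
      = c₅ ^ 3 * phi 3 (c₅ * z)) := by
  have h2 : ∀ z : ℂ, (1 / 2 : ℂ) * z = z / 2 := fun z => by ring
  have h4 : ∀ z : ℂ, (1 / 4 : ℂ) * z = z / 4 := fun z => by ring
  subst hc₂ hc₃ hc₄ hc₅
  refine ⟨fun z => ?_, fun z => ?_, fun z => ?_, fun z => ?_⟩ <;>
    simp only [ha₃₂, ha₄₂, ha₄₃, ha₅₂, ha₅₃, ha₅₄, h2, h4] <;> ring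
end

section
/- Let c₄ = 1/4, c₅ = 1/2, c₆ = 1/5, and define a₆₄(z) = (8/25)φ₂(z/5) − (32/125)φ₃(z/5) and a₆₅(z) = (2/25)φ₂(z/5) − (1/2)a₆₄(z). Then for all z ∈ ℂ: a₆₄(z)c₄ + a₆₅(z)c₅ = c₆²φ₂(c₆z) and a₆₄(z)c₄²/2 + a₆₅(z)c₅²/2 = c₆³φ₃(c₆z); that is, with a₆₂ = a₆₃ = 0, ψ_{2,6} = ψ_{3,6} = 0. -/
theorem stmt_11 (c₄ c₅ c₆ : ℂ)
    (hc₄ : c₄ = 1 / 4) (hc₅ : c₅ = 1 / 2) (hc₆ : c₆ = 1 / 5)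
    (a₆₄ a₆₅ : ℂ → ℂ)
    (ha₆₄ : ∀ z : ℂ, a₆₄ z = (8 / 25) * phi 2 (z / 5) - (32 / 125) * phi 3 (z / 5))
    (ha₆₅ : ∀ z : ℂ, a₆₅ z = (2 / 25) * phi 2 (z / 5) - (1 / 2) * a₆₄ z) :
    (∀ z : ℂ, a₆₄ z * c₄ + a₆₅ z * c₅ = c₆ ^ 2 * phi 2 (c₆ * z)) ∧
    (∀ z : ℂ, a₆₄ z * c₄ ^ 2 / 2 + a₆₅ z * c₅ ^ 2 / 2 = c₆ ^ 3 * phi 3 (c₆ * z)) := by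
  have key : ∀ z : ℂ, c₆ * z = z / 5 := by intro z; rw [hc₆]; ring
  constructor <;> intro z <;> rw [key, ha₆₄, ha₆₅, ha₆₄, hc₄, hc₅, hc₆] <;> ring
end

section
/- Let c₄ = 1/4, c₅ = 1/2, c₆ = 1/5, c₇ = 2/3, let a₆₄(z) = (8/25)φ₂(z/5) − (32/125)φ₃(z/5), and define a₇₄(z) = −(125/162)a₆₄(z), a₇₅(z) = (125/1944)a₆₄(z) − (16/27)φ₂(2z/3) + (320/81)φ₃(2z/3), a₇₆(z) = (3125/3888)a₆₄(z) + (100/27)φ₂(2z/3) − (800/81)φ₃(2z/3). Then for all z ∈ ℂ: a₇₄(z)c₄ + a₇₅(z)c₅ + a₇₆(z)c₆ = c₇²φ₂(c₇z) and a₇₄(z)c₄²/2 + a₇₅(z)c₅²/2 + a₇₆(z)c₆²/2 = c₇³φ₃(c₇z); that is, with a₇₂ = a₇₃ = 0, ψ_{2,7} = ψ_{3,7} = 0. -/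
theorem stmt_12 (c₄ c₅ c₆ c₇ : ℂ)
    (hc₄ : c₄ = 1 / 4) (hc₅ : c₅ = 1 / 2) (hc₆ : c₆ = 1 / 5) (hc₇ : c₇ = 2 / 3)
    (a₆₄ a₇₄ a₇₅ a₇₆ : ℂ → ℂ)
    (ha₆₄ : ∀ z : ℂ, a₆₄ z = (8 / 25) * phi 2 (z / 5) - (32 / 125) * phi 3 (z / 5))
    (ha₇₄ : ∀ z : ℂ, a₇₄ z = -(125 / 162) * a₆₄ z)
    (ha₇₅ : ∀ z : ℂ, a₇₅ z =
      (125 / 1944) * a₆₄ z - (16 / 27) * phi 2 (2 * z / 3) + (320 / 81) * phi 3 (2 * z / 3))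
    (ha₇₆ : ∀ z : ℂ, a₇₆ z =
      (3125 / 3888) * a₆₄ z + (100 / 27) * phi 2 (2 * z / 3) - (800 / 81) * phi 3 (2 * z / 3)) :
    (∀ z : ℂ, a₇₄ z * c₄ + a₇₅ z * c₅ + a₇₆ z * c₆ = c₇ ^ 2 * phi 2 (c₇ * z)) ∧
    (∀ z : ℂ, a₇₄ z * c₄ ^ 2 / 2 + a₇₅ z * c₅ ^ 2 / 2 + a₇₆ z * c₆ ^ 2 / 2
      = c₇ ^ 3 * phi 3 (c₇ * z)) := by
  constructor <;> intro z <;>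
    · have hz : (2:ℂ) / 3 * z = 2 * z / 3 := by ring
      rw [ha₇₄ z, ha₇₅ z, ha₇₆ z, hc₄, hc₅, hc₆, hc₇, hz]; ring
end

section
/- Let c₅ = 1/2, c₆ = 1/5, c₇ = 2/3, c₈ = 1, let a₆₄(z) = (8/25)φ₂(z/5) − (32/125)φ₃(z/5), and define Φ(z) = (5/32)a₆₄(z) − (1/28)φ₂(z/5) + (36/175)φ₂(2z/3) − (48/25)φ₃(2z/3) + (6/175)φ₄(z/5) + (192/35)φ₄(2z/3) + 6φ₄(z), a₈₅(z) = (208/3)φ₃(z) − (16/3)φ₂(z) − 40Φ(z), a₈₆(z) = −(250/3)φ₃(z) + (250/21)φ₂(z) + (250/7)Φ(z), a₈₇(z) = −27φ₃(z) + (27/14)φ₂(z) + (135/7)Φ(z). Then for all z ∈ ℂ: a₈₅(z)c₅ + a₈₆(z)c₆ + a₈₇(z)c₇ = φ₂(z) and a₈₅(z)c₅²/2 + a₈₆(z)c₆²/2 + a₈₇(z)c₇²/2 = φ₃(z); that is, with a₈₂ = a₈₃ = a₈₄ = 0 and c₈ = 1, ψ_{2,8} = ψ_{3,8} = 0. -/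
theorem stmt_13 (c₅ c₆ c₇ c₈ : ℂ)
    (hc₅ : c₅ = 1 / 2) (hc₆ : c₆ = 1 / 5) (hc₇ : c₇ = 2 / 3) (hc₈ : c₈ = 1)
    (a₆₄ Φ a₈₅ a₈₆ a₈₇ : ℂ → ℂ)
    (ha₆₄ : ∀ z : ℂ, a₆₄ z = (8 / 25) * phi 2 (z / 5) - (32 / 125) * phi 3 (z / 5))
    (hΦ : ∀ z : ℂ, Φ z = (5 / 32) * a₆₄ z - (1 / 28) * phi 2 (z / 5)
      + (36 / 175) * phi 2 (2 * z / 3) - (48 / 25) * phi 3 (2 * z / 3)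
      + (6 / 175) * phi 4 (z / 5) + (192 / 35) * phi 4 (2 * z / 3) + 6 * phi 4 z)
    (ha₈₅ : ∀ z : ℂ, a₈₅ z = (208 / 3) * phi 3 z - (16 / 3) * phi 2 z - 40 * Φ z)
    (ha₈₆ : ∀ z : ℂ, a₈₆ z = -(250 / 3) * phi 3 z + (250 / 21) * phi 2 z + (250 / 7) * Φ z)
    (ha₈₇ : ∀ z : ℂ, a₈₇ z = -27 * phi 3 z + (27 / 14) * phi 2 z + (135 / 7) * Φ z) :
    (∀ z : ℂ, a₈₅ z * c₅ + a₈₆ z * c₆ + a₈₇ z * c₇ = phi 2 z) ∧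
    (∀ z : ℂ, a₈₅ z * c₅ ^ 2 / 2 + a₈₆ z * c₆ ^ 2 / 2 + a₈₇ z * c₇ ^ 2 / 2 = phi 3 z) := by
  constructor <;> intro z <;> rw [ha₈₅ z, ha₈₆ z, ha₈₇ z, hc₅, hc₆, hc₇] <;> ring
end

section
/- With the expRK5s8 coefficients — c₄ = 1/4, c₅ = 1/2, c₆ = 1/5, c₇ = 2/3, c₈ = 1; a₆₄(z) = (8/25)φ₂(z/5) − (32/125)φ₃(z/5); a₆₅(z) = (2/25)φ₂(z/5) − (1/2)a₆₄(z); a₇₄(z) = −(125/162)a₆₄(z); a₇₅(z) = (125/1944)a₆₄(z) − (16/27)φ₂(2z/3) + (320/81)φ₃(2z/3); a₇₆(z) = (3125/3888)a₆₄(z) + (100/27)φ₂(2z/3) − (800/81)φ₃(2z/3); Φ(z) = (5/32)a₆₄(z) − (1/28)φ₂(z/5) + (36/175)φ₂(2z/3) − (48/25)φ₃(2z/3) + (6/175)φ₄(z/5) + (192/35)φ₄(2z/3) + 6φ₄(z); a₈₅(z) = (208/3)φ₃(z) − (16/3)φ₂(z) − 40Φ(z); a₈₆(z) = −(250/3)φ₃(z)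 + (250/21)φ₂(z) + (250/7)Φ(z); a₈₇(z) = −27φ₃(z) + (27/14)φ₂(z) + (135/7)Φ(z) — the weakened fifth-order condition 9 holds: for all z ∈ ℂ, (125/336)ψ_{4,6}(z) + (27/56)ψ_{4,7}(z) + (5/48)ψ_{4,8}(z) = 0, where ψ_{4,6}(z) = a₆₄(z)c₄³/6 + a₆₅(z)c₅³/6 − c₆⁴φ₄(c₆z), ψ_{4,7}(z) = a₇₄(z)c₄³/6 + a₇₅(z)c₅³/6 + a₇₆(z)c₆³/6 − c₇⁴φ₄(c₇z), and ψ_{4,8}(z) = a₈₅(z)c₅³/6 + a₈₆(z)c₆³/6 + a₈₇(z)c₇³/6 − φ₄(z). -/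
theorem stmt_14 (c₄ c₅ c₆ c₇ c₈ : ℂ)
    (hc₄ : c₄ = 1 / 4) (hc₅ : c₅ = 1 / 2) (hc₆ : c₆ = 1 / 5) (hc₇ : c₇ = 2 / 3) (hc₈ : c₈ = 1)
    (a₆₄ a₆₅ a₇₄ a₇₅ a₇₆ Φ a₈₅ a₈₆ a₈₇ ψ₄₆ ψ₄₇ ψ₄₈ : ℂ → ℂ)
    (ha₆₄ : ∀ z : ℂ, a₆₄ z = (8 / 25) * phi 2 (z / 5) - (32 / 125) * phi 3 (z / 5))
    (ha₆₅ : ∀ z : ℂ, a₆₅ z = (2 / 25) * phi 2 (z / 5) - (1 / 2) * a₆₄ z)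
    (ha₇₄ : ∀ z : ℂ, a₇₄ z = -(125 / 162) * a₆₄ z)
    (ha₇₅ : ∀ z : ℂ, a₇₅ z =
      (125 / 1944) * a₆₄ z - (16 / 27) * phi 2 (2 * z / 3) + (320 / 81) * phi 3 (2 * z / 3))
    (ha₇₆ : ∀ z : ℂ, a₇₆ z =
      (3125 / 3888) * a₆₄ z + (100 / 27) * phi 2 (2 * z / 3) - (800 / 81) * phi 3 (2 * z / 3))
    (hΦ : ∀ z : ℂ, Φ z = (5 / 32) * a₆₄ z - (1 / 28) * phi 2 (z / 5)
      + (36 / 175) * phi 2 (2 * z / 3) - (48 / 25) * phi 3 (2 * z / 3)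
      + (6 / 175) * phi 4 (z / 5) + (192 / 35) * phi 4 (2 * z / 3) + 6 * phi 4 z)
    (ha₈₅ : ∀ z : ℂ, a₈₅ z = (208 / 3) * phi 3 z - (16 / 3) * phi 2 z - 40 * Φ z)
    (ha₈₆ : ∀ z : ℂ, a₈₆ z = -(250 / 3) * phi 3 z + (250 / 21) * phi 2 z + (250 / 7) * Φ z)
    (ha₈₇ : ∀ z : ℂ, a₈₇ z = -27 * phi 3 z + (27 / 14) * phi 2 z + (135 / 7) * Φ z)
    (hψ₄₆ : ∀ z : ℂ, ψ₄₆ z = a₆₄ z * c₄ ^ 3 / 6 + a₆₅ z * c₅ ^ 3 / 6 - c₆ ^ 4 * phi 4 (c₆ * z))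
    (hψ₄₇ : ∀ z : ℂ, ψ₄₇ z = a₇₄ z * c₄ ^ 3 / 6 + a₇₅ z * c₅ ^ 3 / 6 + a₇₆ z * c₆ ^ 3 / 6
      - c₇ ^ 4 * phi 4 (c₇ * z))
    (hψ₄₈ : ∀ z : ℂ, ψ₄₈ z = a₈₅ z * c₅ ^ 3 / 6 + a₈₆ z * c₆ ^ 3 / 6 + a₈₇ z * c₇ ^ 3 / 6
      - phi 4 z) :
    ∀ z : ℂ, (125 / 336) * ψ₄₆ z + (27 / 56) * ψ₄₇ z + (5 / 48) * ψ₄₈ z = 0 := by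
  intro z
  have h1 : c₆ * z = z / 5 := by rw [hc₆]; ring
  have h2 : c₇ * z = 2 * z / 3 := by rw [hc₇]; ring
  simp only [hψ₄₆, hψ₄₇, hψ₄₈, ha₈₅, ha₈₆, ha₈₇, ha₇₄, ha₇₅, ha₇₆, hΦ, ha₆₄, ha₆₅,
    hc₄, hc₅, hc₆, hc₇, h1, h2]
  ring
end

section
/- The scheme expRK5s8 satisfies all requirements collected in the construction of Section 5. Concretely, with nodes c₂ = c₃ = c₅ = 1/2, c₄ = 1/4, c₆ = 1/5, c₇ = 2/3, c₈ = 1, weights b₂ = b₃ = b₄ = b₅ = 0, b₆ = (125/14)φ₂ − (625/14)φ₃ + (1125/14)φ₄, b₇ = −(27/14)φ₂ + (162/7)φ₃ − (405/7)φ₄, b₈ = (1/2)φ₂ − (13/2)φ₃ + (45/2)φ₄, and internal coefficients a₃₂(z) = (1/2)φ₂(z/2), a₄₃(z) = (1/8)φ₂(z/4), a₅₃(z) = −(1/2)φ₂(z/2) + 2φ₃(z/2), a₅₄(z) = 2φ₂(z/2) − 4φ₃(z/2), a₆₄(z) = (8/25)φ₂(z/5) − (32/125)φ₃(z/5), a₆₅(z)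 = (2/25)φ₂(z/5) − (1/2)a₆₄(z), a₇₄(z) = −(125/162)a₆₄(z), a₇₅(z) = (125/1944)a₆₄(z) − (16/27)φ₂(2z/3) + (320/81)φ₃(2z/3), a₇₆(z) = (3125/3888)a₆₄(z) + (100/27)φ₂(2z/3) − (800/81)φ₃(2z/3), a₈₅(z) = (208/3)φ₃(z) − (16/3)φ₂(z) − 40Φ(z), a₈₆(z) = −(250/3)φ₃(z) + (250/21)φ₂(z) + (250/7)Φ(z), a₈₇(z) = −27φ₃(z) + (27/14)φ₂(z) + (135/7)Φ(z), where Φ(z) = (5/32)a₆₄(z) − (1/28)φ₂(z/5) + (36/175)φ₂(2z/3) − (48/25)φ₃(2z/3) + (6/175)φ₄(z/5) + (192/35)φ₄(2z/3) + 6φ₄(z), and all other a_{ij} = 0, the following hold for all z ∈ ℂ: (i) ∑_{i=2}^{8} b_i(z)c_i = φ₂(z), ∑_{i=2}^{8} b_i(z)c_i²/2 = φ₃(z), ∑_{i=2}^{8} b_i(z)c_i³/6 = φ₄(z); (ii) ψ_{2,i}(z) = 0 for i = 3, 4, 5, 6, 7, 8 and ψ_{3,i}(z) = 0 for i = 5,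 6, 7, 8; (iii) ∑_{i=2}^{8} b_i(0)c_i⁴/4! = 1/120; (iv) b₆(0)ψ_{4,6}(z) + b₇(0)ψ_{4,7}(z) + b₈(0)ψ_{4,8}(z) = 0; and (v) b₆(0)a₆₄(z) + b₇(0)a₇₄(z) + b₈(0)a₈₄(z) = 0. -/
/-- `ψ_{j,i}(z) = ∑_{k=2}^{i-1} a_{ik}(z) c_k^{j-1}/(j-1)! - c_i^j φ_j(c_i z)`. -/
noncomputable def psi (c : ℕ → ℂ) (a : ℕ → ℕ → ℂ → ℂ) (j i : ℕ) (z : ℂ) : ℂ :=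
  (∑ k ∈ Finset.Icc 2 (i - 1), a i k z * (c k) ^ (j - 1) / (Nat.factorial (j - 1) : ℂ))
    - (c i) ^ j * phi j (c i * z)

/-! Every condition is an identity between linear combinations, with rational coefficients,
of the values `φ_j(z)`, `φ_j(z/5)`, `φ_j(z/4)`, `φ_j(z/2)`, `φ_j(2z/3)`: once the nodes and the
vanishing coefficients `a_{ik}` are inserted, both sides agree as formal expressions in these
values. The only analytic input is `φ_k(0) = 1/k!`, which evaluates the weights `b_i(0)`. -/

theorem phi_succ_zero (k : ℕ) : phi (k + 1) 0 = 1 / ((k + 1).factorial : ℂ) := by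
  have h : phi (k + 1) 0 = ∫ θ in (0:ℝ)..1, ((θ ^ k / k.factorial : ℝ) : ℂ) := by
    simp [phi]
  rw [h, intervalIntegral.integral_ofReal, intervalIntegral.integral_div, integral_pow]
  push_cast [Nat.factorial_succ]
  field_simp
  simp

theorem stmt_15 (c : ℕ → ℂ) (b : ℕ → ℂ → ℂ) (a : ℕ → ℕ → ℂ → ℂ) (Φ : ℂ → ℂ)
    (hc2 : c 2 = 1 / 2) (hc3 : c 3 = 1 / 2) (hc4 : c 4 = 1 / 4) (hc5 : c 5 = 1 / 2)
    (hc6 : c 6 = 1 / 5) (hc7 : c 7 = 2 / 3) (hc8 : c 8 = 1)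
    (hb2 : b 2 = 0) (hb3 : b 3 = 0) (hb4 : b 4 = 0) (hb5 : b 5 = 0)
    (hb6 : ∀ z : ℂ, b 6 z = (125 / 14) * phi 2 z - (625 / 14) * phi 3 z + (1125 / 14) * phi 4 z)
    (hb7 : ∀ z : ℂ, b 7 z = -(27 / 14) * phi 2 z + (162 / 7) * phi 3 z - (405 / 7) * phi 4 z)
    (hb8 : ∀ z : ℂ, b 8 z = (1 / 2) * phi 2 z - (13 / 2) * phi 3 z + (45 / 2) * phi 4 z)
    (ha32 : ∀ z : ℂ, a 3 2 z = (1 / 2) * phi 2 (z / 2))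
    (ha43 : ∀ z : ℂ, a 4 3 z = (1 / 8) * phi 2 (z / 4))
    (ha53 : ∀ z : ℂ, a 5 3 z = -(1 / 2) * phi 2 (z / 2) + 2 * phi 3 (z / 2))
    (ha54 : ∀ z : ℂ, a 5 4 z = 2 * phi 2 (z / 2) - 4 * phi 3 (z / 2))
    (ha64 : ∀ z : ℂ, a 6 4 z = (8 / 25) * phi 2 (z / 5) - (32 / 125) * phi 3 (z / 5))
    (ha65 : ∀ z : ℂ, a 6 5 z = (2 / 25) * phi 2 (z / 5) - (1 / 2) * a 6 4 z)
    (ha74 : ∀ z : ℂ, a 7 4 z = -(125 / 162) * a 6 4 z)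
    (ha75 : ∀ z : ℂ, a 7 5 z =
      (125 / 1944) * a 6 4 z - (16 / 27) * phi 2 (2 * z / 3) + (320 / 81) * phi 3 (2 * z / 3))
    (ha76 : ∀ z : ℂ, a 7 6 z =
      (3125 / 3888) * a 6 4 z + (100 / 27) * phi 2 (2 * z / 3) - (800 / 81) * phi 3 (2 * z / 3))
    (hΦ : ∀ z : ℂ, Φ z = (5 / 32) * a 6 4 z - (1 / 28) * phi 2 (z / 5)
      + (36 / 175) * phi 2 (2 * z / 3) - (48 / 25) * phi 3 (2 * z / 3)
      + (6 / 175) * phi 4 (z / 5) + (192 / 35) * phi 4 (2 * z / 3) + 6 * phi 4 z)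
    (ha85 : ∀ z : ℂ, a 8 5 z = (208 / 3) * phi 3 z - (16 / 3) * phi 2 z - 40 * Φ z)
    (ha86 : ∀ z : ℂ, a 8 6 z = -(250 / 3) * phi 3 z + (250 / 21) * phi 2 z + (250 / 7) * Φ z)
    (ha87 : ∀ z : ℂ, a 8 7 z = -27 * phi 3 z + (27 / 14) * phi 2 z + (135 / 7) * Φ z)
    (haOther : ∀ i k : ℕ, ((i, k) : ℕ × ℕ) ∉
      ({(3, 2), (4, 3), (5, 3), (5, 4), (6, 4), (6, 5), (7, 4), (7, 5), (7, 6),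
        (8, 5), (8, 6), (8, 7)} : Set (ℕ × ℕ)) → a i k = 0) :
    -- (i) the stiff order conditions 1, 2 and 4 in strong form
    (∀ z : ℂ, ∑ i ∈ Finset.Icc 2 8, b i z * c i = phi 2 z) ∧
    (∀ z : ℂ, ∑ i ∈ Finset.Icc 2 8, b i z * (c i) ^ 2 / 2 = phi 3 z) ∧
    (∀ z : ℂ, ∑ i ∈ Finset.Icc 2 8, b i z * (c i) ^ 3 / 6 = phi 4 z) ∧
    -- (ii) vanishing of the internal ψ-functions
    (∀ z : ℂ, ∀ i ∈ ({3, 4, 5, 6, 7, 8} : Finset ℕ), psi c a 2 i z = 0) ∧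
    (∀ z : ℂ, ∀ i ∈ ({5, 6, 7, 8} : Finset ℕ), psi c a 3 i z = 0) ∧
    -- (iii) the weakened condition 8 at Z = 0
    (∑ i ∈ Finset.Icc 2 8, b i 0 * (c i) ^ 4 / 24 = 1 / 120) ∧
    -- (iv) the weakened condition 9
    (∀ z : ℂ, b 6 0 * psi c a 4 6 z + b 7 0 * psi c a 4 7 z + b 8 0 * psi c a 4 8 z = 0) ∧
    -- (v) the weakened conditions 10/11
    (∀ z : ℂ, b 6 0 * a 6 4 z + b 7 0 * a 7 4 z + b 8 0 * a 8 4 z = 0) := by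
  obtain ⟨h42, h52, h62, h63, h72, h73, h82, h83, h84⟩ :
      a 4 2 = 0 ∧ a 5 2 = 0 ∧ a 6 2 = 0 ∧ a 6 3 = 0 ∧ a 7 2 = 0 ∧ a 7 3 = 0 ∧
        a 8 2 = 0 ∧ a 8 3 = 0 ∧ a 8 4 = 0 := by
    simp [haOther]
  simp (disch := decide) only [Finset.mem_insert, Finset.mem_singleton, forall_eq_or_imp,
      forall_eq, psi, Finset.sum_Icc_succ_top, Finset.Icc_self, Finset.sum_singleton,
      Nat.reduceSub, Nat.factorial, phi_succ_zero, Pi.zero_apply,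
      hc2, hc3, hc4, hc5, hc6, hc7, hc8, hb2, hb3, hb4, hb5, hb6, hb7, hb8,
      ha32, ha43, ha53, ha54, ha64, ha65, ha74, ha75, ha76, hΦ, ha85, ha86, ha87,
      h42, h52, h62, h63, h72, h73, h82, h83, h84]
  ring_nf
  simp only [implies_true, and_self]
end
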